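/- Pruning correctness for recall-threshold filtering: for any real threshold λ, if P₁ is nonempty and Rec(Φ₁) ≤ λ, then Rec(Φ₂) ≤ λ for every refinement Φ₂ of Φ₁; hence a pattern whose recall is below the threshold can be discarded together with all of its refinements. -/
import Mathlib


/-- Pruning correctness for recall-threshold filtering: if the recall of Φ₁ is
at most λ, then so is the recall of every refinement Φ₂ of Φ₁. -/
theorem recall_threshold_pruning {τ σ : Type*} (P₁ : Finset τ) (A : τ → Finset σ)
    (lam : ℝ) (hne : P₁.Nonempty)
    (Φ₁ : σ → Prop) [DecidablePred Φ₁]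
    (hΦ₁ : (((P₁.filter (fun t' => ∃ s ∈ A t', Φ₁ s)).card : ℝ) /
        (((P₁.filter (fun t' => ∃ s ∈ A t', Φ₁ s)).card : ℝ) +
          ((P₁.filter (fun t' => ¬ ∃ s ∈ A t', Φ₁ s)).card : ℝ))) ≤ lam) :
    ∀ (Φ₂ : σ → Prop) [DecidablePred Φ₂], (∀ s : σ, Φ₂ s → Φ₁ s) →
      (((P₁.filter (fun t' => ∃ s ∈ A t', Φ₂ s)).card : ℝ) /
        (((P₁.filter (fun t' => ∃ s ∈ A t', Φ₂ s)).card : ℝ) +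
          ((P₁.filter (fun t' => ¬ ∃ s ∈ A t', Φ₂ s)).card : ℝ))) ≤ lam := by
  intro Φ₂ _ href
  have key : ∀ (Φ : σ → Prop) [DecidablePred Φ],
      (P₁.filter (fun t' => ∃ s ∈ A t', Φ s)).card +
      (P₁.filter (fun t' => ¬ ∃ s ∈ A t', Φ s)).card = P₁.card := by
    intro Φ _
    exact Finset.card_filter_add_card_filter_not _
  have h1 := key Φ₁
  have h2 := key Φ₂
  have hP : (0 : ℝ) < P₁.card := by positivity
  have hsub : (P₁.filter (fun t' => ∃ s ∈ A t', Φ₂ s)).card ≤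
      (P₁.filter (fun t' => ∃ s ∈ A t', Φ₁ s)).card := by
    apply Finset.card_le_card
    intro t ht
    simp only [Finset.mem_filter] at ht ⊢
    obtain ⟨h, s, hs, hΦ⟩ := ht
    exact ⟨h, s, hs, href s hΦ⟩
  calc ((P₁.filter (fun t' => ∃ s ∈ A t', Φ₂ s)).card : ℝ) /
        (((P₁.filter (fun t' => ∃ s ∈ A t', Φ₂ s)).card : ℝ) +
          ((P₁.filter (fun t' => ¬ ∃ s ∈ A t', Φ₂ s)).card : ℝ))
      = ((P₁.filter (fun t' => ∃ s ∈ A t', Φ₂ s)).card : ℝ) / P₁.card := by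
        rw [← Nat.cast_add, h2]
    _ ≤ ((P₁.filter (fun t' => ∃ s ∈ A t', Φ₁ s)).card : ℝ) / P₁.card := by
        gcongr
    _ ≤ lam := by rw [← Nat.cast_add, h1] at hΦ₁; exact hΦ₁
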